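/- arXiv:0906.1295 — 5 statements merged into one kernel-verified Lean document; each statement's English description precedes it below -/
import Mathlib

section
/- Let z ∈ ℂ with Im z ≠ 0 and |z| < 1. The three points 1/z, conj(z), and -1 lie on a common circle C_z in ℂ, and this circle is tangent to the real axis at -1 (i.e., -1 ∈ C_z and C_z ∩ ℝ = {-1}). -/
/-!
A circle tangent to the real axis at `a` has centre `a + t i` and radius `|t|`, and `w` lies on it
iff `|w - a|² = 2 t Im w`; its only real point is `a`. For `a = -1` this condition holds for `z̄`
iff `|z + 1|² = -2 t Im z`, and so it does for `1/z`, because `|1/z + 1|² = |z + 1|² / |z|²` and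
`Im (1/z) = -Im z / |z|²`. Hence `t = -|z + 1|² / (2 Im z)` works for both points.
-/

open Complex ComplexConjugate

theorem norm_sub_add_mul_I_eq_abs_iff (a t : ℝ) (w : ℂ) :
    ‖w - (a + t * I)‖ = |t| ↔ normSq (w - a) = 2 * t * w.im := by
  rw [← sq_eq_sq₀ (norm_nonneg _) (abs_nonneg t), sq_abs, ← normSq_eq_norm_sq, normSq_apply,
    normSq_apply]
  simp only [sub_re, sub_im, add_re, add_im, ofReal_re, ofReal_im, mul_re, mul_im, I_re, I_im]
  constructor <;> intro h <;> linarith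

theorem eq_of_norm_sub_add_mul_I_eq_abs {a t : ℝ} {w : ℂ} (h : ‖w - (a + t * I)‖ = |t|)
    (hw : w.im = 0) : w = a := by
  rwa [norm_sub_add_mul_I_eq_abs_iff, hw, mul_zero, normSq_eq_zero, sub_eq_zero] at h

theorem normSq_conj_add_one (z : ℂ) : normSq (conj z + 1) = normSq (z + 1) := by
  rw [← normSq_conj, map_add, conj_conj, map_one]

theorem normSq_inv_add_one {z : ℂ} (hz : z ≠ 0) :
    normSq (z⁻¹ + 1) = normSq (z + 1) / normSq z := by
  rw [show z⁻¹ + 1 = z⁻¹ * (z + 1) by field_simp; ring, map_mul, map_inv₀, inv_mul_eq_div]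

theorem stmt1_general (z : ℂ)
    (hQ : z.im ≠ 0) :
    ∃ c : ℂ, ∃ r : ℝ, 0 < r ∧
      ‖1 / z - c‖ = r ∧
      ‖(starRingEnd ℂ) z - c‖ = r ∧
      ‖(-1 : ℂ) - c‖ = r ∧
      {w : ℂ | ‖w - c‖ = r ∧ w.im = 0} = {(-1 : ℂ)} := by
  have hz : z ≠ 0 := fun h => hQ (by simp [h])
  set t := -normSq (z + 1) / (2 * z.im) with ht_def
  have ht : 2 * t * z.im = -normSq (z + 1) := by rw [ht_def]; field_simp
  have ht0 : t ≠ 0 := by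
    refine div_ne_zero (neg_ne_zero.2 fun h => hQ ?_) (by simpa using hQ)
    simpa using congrArg im (normSq_eq_zero.1 h)
  have hcirc (w : ℂ) : ‖w - ((-1 : ℝ) + t * I)‖ = |t| ↔ normSq (w + 1) = 2 * t * w.im := by
    simpa using norm_sub_add_mul_I_eq_abs_iff (-1) t w
  refine ⟨(-1 : ℝ) + t * I, |t|, abs_pos.2 ht0, ?_, ?_, ?_, ?_⟩
  · rw [hcirc, one_div, normSq_inv_add_one hz, inv_im, mul_div_assoc', mul_neg, ht, neg_neg]
  · rw [hcirc, normSq_conj_add_one, conj_im]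
    linarith
  · simp
  · ext w
    refine ⟨fun ⟨hw, him⟩ => by simpa using eq_of_norm_sub_add_mul_I_eq_abs hw him, ?_⟩
    rintro rfl
    simp

theorem stmt1 (z : ℂ) (h0 : 0 < ‖z‖) (h1 : ‖z‖ < 1)
    (hQ : z.im ≠ 0) :
    ∃ c : ℂ, ∃ r : ℝ, 0 < r ∧
      ‖1 / z - c‖ = r ∧
      ‖(starRingEnd ℂ) z - c‖ = r ∧
      ‖(-1 : ℂ) - c‖ = r ∧
      {w : ℂ | ‖w - c‖ = r ∧ w.im = 0} = {(-1 : ℂ)} :=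
  stmt1_general z hQ
end

section
/- Let z ∈ ℂ with Im z ≠ 0. The unique circle passing through the three points 1/z, conj(z), and -1 has center c = -1 - i·|z+1|²/(2·Im z), i.e., the distances |c - 1/z|, |c - conj(z)|, and |c - (-1)| are all equal (assuming z ≠ 0 so 1/z is defined). -/
/-!
Write `c = -1 + t I` with `t = -|z+1|² / (2 Im z)`. A point on the vertical line through `-1` is
equidistant from `-1` and `w = conj z` exactly when `2 t Im w = |w + 1|²`, which is how `t` is chosen.
The circle through `-1` and `conj z` centred at `c` then has radius `|t|`, and `|c|² = 1 + t²`, so it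
is orthogonal to the unit circle. Inversion `w ↦ 1 / conj w` in the unit circle maps such a circle
to itself and sends `conj z` to `1 / z`.
-/

open Complex

lemma norm_real_add_mul_I_sub_eq_abs {a t : ℝ} {w : ℂ} (ht : 2 * t * w.im = ‖w - a‖ ^ 2) :
    ‖(a + t * I : ℂ) - w‖ = |t| := by
  rw [← sq_eq_sq₀ (norm_nonneg _) (abs_nonneg t), sq_abs, Complex.sq_norm, normSq_apply]
  rw [Complex.sq_norm, normSq_apply] at ht
  simp only [sub_re, sub_im, add_re, add_im, ofReal_re, ofReal_im, mul_re, mul_im, I_re, I_im]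
    at ht ⊢
  linear_combination -ht

lemma norm_sub_inv_conj_eq_of_sq_norm_sub_add_one {c w : ℂ} (h : ‖c - w‖ ^ 2 + 1 = ‖c‖ ^ 2) :
    ‖c - (starRingEnd ℂ w)⁻¹‖ = ‖c - w‖ := by
  have hw : normSq w ≠ 0 := by
    rintro hw
    rw [normSq_eq_zero.mp hw] at h
    simp at h
  rw [← sq_eq_sq₀ (norm_nonneg _) (norm_nonneg _), Complex.sq_norm, Complex.sq_norm]
  rw [Complex.sq_norm, Complex.sq_norm] at h
  have hnw : normSq w = w.re * w.re + w.im * w.im := normSq_apply w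
  simp only [normSq_apply c, normSq_apply (c - w), normSq_apply (c - _), sub_re, sub_im, inv_re,
    inv_im, normSq_conj, conj_re, conj_im] at h ⊢
  field_simp
  linear_combination (normSq w - normSq w ^ 2) * h + (normSq w - 1) * hnw

theorem stmt2_general (z : ℂ) (hQ : z.im ≠ 0) :
    let c : ℂ := -1 - Complex.I * ((‖z + 1‖) ^ 2 / (2 * z.im) : ℝ)
    ‖c - 1 / z‖ = ‖c - (starRingEnd ℂ) z‖ ∧
    ‖c - (starRingEnd ℂ) z‖ = ‖c - (-1)‖ := by
  intro c
  set t : ℝ := -(‖z + 1‖ ^ 2 / (2 * z.im))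
  have hc : c = ((-1 : ℝ) : ℂ) + t * I := by simp only [c, t]; push_cast; ring
  have hconj : ‖c - starRingEnd ℂ z‖ = |t| := by
    rw [hc]
    refine norm_real_add_mul_I_sub_eq_abs ?_
    have hsub : starRingEnd ℂ z - ((-1 : ℝ) : ℂ) = starRingEnd ℂ (z + 1) := by simp
    rw [hsub, norm_conj, conj_im]
    simp only [t]
    field_simp
  have hneg : ‖c - (-1)‖ = |t| := by simp [hc]
  have horth : ‖c - starRingEnd ℂ z‖ ^ 2 + 1 = ‖c‖ ^ 2 := by
    rw [hconj, sq_abs, hc, Complex.sq_norm, normSq_add_mul_I]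
    ring
  refine ⟨?_, hconj.trans hneg.symm⟩
  simpa using norm_sub_inv_conj_eq_of_sq_norm_sub_add_one horth

theorem stmt2 (z : ℂ) (hz : z ≠ 0) (hQ : z.im ≠ 0) :
    let c : ℂ := -1 - Complex.I * ((‖z + 1‖) ^ 2 / (2 * z.im) : ℝ)
    ‖c - 1 / z‖ = ‖c - (starRingEnd ℂ) z‖ ∧
    ‖c - (starRingEnd ℂ) z‖ = ‖c - (-1)‖ :=
  stmt2_general z hQ
end

section
/- For a ∈ ℂ and r > 0, define the semiquadric Λ_{a,r} = {(z,w) ∈ ℂ² : (z-a)(w - conj(a)) = r², 0 < |z-a| < r}. Then the closure of Λ_{a,r} in ℂ² intersects Σ = {(ζ, conj(ζ)) : ζ ∈ ℂ} exactly in the set {(ζ, conj(ζ)) : |ζ - a| = r}. -/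
/-!
On `Σ = {(ζ, ζ̄)}` the defining equation of `Λ_{a,r}` reads `|z - a|² = r²`, and it survives
passage to the closure, so `closure Λ_{a,r} ∩ Σ` lies over the circle `|z - a| = r`. Conversely,
`Λ_{a,r}` is the image of the punctured disc `0 < |ζ| < r` under `ζ ↦ (a + ζ, ā + r²/ζ)`, which is
continuous away from `0`; at a boundary point `|c| = r` we have `r²/c = c̄`, so this map sends `c`
to `(a + c, conj (a + c)) ∈ Σ`, a limit of points of `Λ_{a,r}`.
-/

open Complex ComplexConjugate Metric Set

theorem closedBall_subset_closure_ball_diff_center {E : Type*} [NormedAddCommGroup E]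
    [NormedSpace ℝ E] [Nontrivial E] (x : E) {r : ℝ} (hr : r ≠ 0) :
    closedBall x r ⊆ closure (ball x r \ {x}) := by
  rw [← closure_ball x hr, sdiff_eq]
  exact closure_minimal ((dense_compl_singleton x).open_subset_closure_inter isOpen_ball)
    isClosed_closure

def semiquadric (a : ℂ) (r : ℝ) : Set (ℂ × ℂ) :=
  {p | (p.1 - a) * (p.2 - conj a) = (r : ℂ) ^ 2 ∧ 0 < ‖p.1 - a‖ ∧ ‖p.1 - a‖ < r}

theorem closure_semiquadric_subset (a : ℂ) (r : ℝ) :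
    closure (semiquadric a r) ⊆ {p | (p.1 - a) * (p.2 - conj a) = (r : ℂ) ^ 2} :=
  closure_minimal (fun _ hp => hp.1) (isClosed_eq (by fun_prop) continuous_const)

theorem norm_sub_eq_of_mem_closure_semiquadric {a z : ℂ} {r : ℝ} (hr : 0 ≤ r)
    (h : (z, conj z) ∈ closure (semiquadric a r)) : ‖z - a‖ = r := by
  have h' : (z - a) * conj (z - a) = (r : ℂ) ^ 2 := by
    rw [map_sub]
    exact closure_semiquadric_subset a r h
  rw [mul_conj'] at h'
  exact (pow_left_inj₀ (norm_nonneg _) hr two_ne_zero).1 (mod_cast h')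

theorem mapsTo_semiquadric (a : ℂ) (r : ℝ) :
    MapsTo (fun ζ => (a + ζ, conj a + (r : ℂ) ^ 2 / ζ)) (ball 0 r \ {0}) (semiquadric a r) := by
  rintro ζ ⟨hζr, hζ0 : ζ ≠ 0⟩
  refine ⟨?_, ?_, ?_⟩ <;> simp only [add_sub_cancel_left]
  · exact mul_div_cancel₀ _ hζ0
  · exact norm_pos_iff.2 hζ0
  · exact mem_ball_zero_iff.1 hζr

theorem mem_closure_semiquadric {a z : ℂ} {r : ℝ} (hr : 0 < r) (hz : ‖z - a‖ = r) :
    (z, conj z) ∈ closure (semiquadric a r) := by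
  set c := z - a
  have hc : c ≠ 0 := norm_pos_iff.1 (hz ▸ hr)
  have hboundary : (a + c, conj a + (r : ℂ) ^ 2 / c) = (z, conj z) := by
    rw [← hz, ← mul_conj', mul_div_cancel_left₀ _ hc, ← map_add, add_sub_cancel]
  have hcl : c ∈ closure (ball 0 r \ {0}) :=
    closedBall_subset_closure_ball_diff_center 0 hr.ne' (mem_closedBall_zero_iff.2 hz.le)
  have hcont : ContinuousAt (fun ζ => (a + ζ, conj a + (r : ℂ) ^ 2 / ζ)) c := by
    fun_prop (disch := exact hc)
  exact hboundary ▸ closure_mono (mapsTo_semiquadric a r).image_subset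
    (hcont.continuousWithinAt.mem_closure_image hcl)

theorem stmt4 (a : ℂ) (r : ℝ) (hr : 0 < r) :
    closure {p : ℂ × ℂ | (p.1 - a) * (p.2 - (starRingEnd ℂ) a) = (r : ℂ) ^ 2 ∧
        0 < ‖p.1 - a‖ ∧ ‖p.1 - a‖ < r} ∩
      {p : ℂ × ℂ | p.2 = (starRingEnd ℂ) p.1} =
    {p : ℂ × ℂ | p.2 = (starRingEnd ℂ) p.1 ∧ ‖p.1 - a‖ = r} := by
  ext ⟨z, w⟩
  simp only [mem_inter_iff, mem_ofPred_eq]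
  constructor
  · rintro ⟨hcl, rfl⟩
    exact ⟨rfl, norm_sub_eq_of_mem_closure_semiquadric hr.le hcl⟩
  · rintro ⟨rfl, hz⟩
    exact ⟨mem_closure_semiquadric hr hz, rfl⟩
end

section
/- For -1 < t < s ≤ 0, the semiquadrics Λ_{t,t+1} and Λ_{s,s+1} are disjoint: there is no (z,w) ∈ ℂ² with (z-t)(w-t) = (t+1)², 0 < |z-t| < t+1, (z-s)(w-s) = (s+1)², and 0 < |z-s| < s+1. -/
/-! Eliminating `w` between the two quadric equations leaves `(t - s) (z + 1)² = 0`, so the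
semiquadrics could only meet over `z = -1`, the tangency point of the two circles. But `-1` lies
on the circle `|ζ - t| = t + 1` itself, not strictly inside it. -/

open Complex

theorem eq_neg_one_of_mul_sub_eq_sq_of_ne {K : Type*} [Field K] {a b z w : K} (hab : a ≠ b)
    (ha : (z - a) * (w - a) = (a + 1) ^ 2) (hb : (z - b) * (w - b) = (b + 1) ^ 2) :
    z = -1 := by
  have h : (a - b) * (z + 1) ^ 2 = 0 := by
    linear_combination (z - a) * hb - (z - b) * ha
  simpa [sub_eq_zero, hab, add_eq_zero_iff_eq_neg] using h

theorem le_norm_neg_one_sub_ofReal (t : ℝ) : t + 1 ≤ ‖(-1 : ℂ) - t‖ := by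
  rw [show (-1 : ℂ) - t = ((-(t + 1) : ℝ) : ℂ) by push_cast; ring, norm_real, Real.norm_eq_abs,
    abs_neg]
  exact le_abs_self _

theorem stmt15_general (t s : ℝ) (hts : t < s) :
    ¬ ∃ p : ℂ × ℂ,
      ((p.1 - t) * (p.2 - t) = ((t : ℂ) + 1) ^ 2 ∧
        0 < ‖p.1 - t‖ ∧ ‖p.1 - t‖ < t + 1) ∧
      ((p.1 - s) * (p.2 - s) = ((s : ℂ) + 1) ^ 2 ∧
        0 < ‖p.1 - s‖ ∧ ‖p.1 - s‖ < s + 1) := by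
  rintro ⟨⟨z, w⟩, ⟨ht_eq, -, ht_lt⟩, ⟨hs_eq, -, -⟩⟩
  have hz : z = -1 :=
    eq_neg_one_of_mul_sub_eq_sq_of_ne (mod_cast hts.ne) ht_eq hs_eq
  subst hz
  exact (le_norm_neg_one_sub_ofReal t).not_gt ht_lt

theorem stmt15 (t s : ℝ) (ht : -1 < t) (hts : t < s) (hs : s ≤ 0) :
    ¬ ∃ p : ℂ × ℂ,
      ((p.1 - t) * (p.2 - t) = ((t : ℂ) + 1) ^ 2 ∧
        0 < ‖p.1 - t‖ ∧ ‖p.1 - t‖ < t + 1) ∧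
      ((p.1 - s) * (p.2 - s) = ((s : ℂ) + 1) ^ 2 ∧
        0 < ‖p.1 - s‖ ∧ ‖p.1 - s‖ < s + 1) :=
  stmt15_general t s hts
end

section
/- Let z ∈ ℂ with 0 < |z| ≤ 1 and Im z ≠ 0, and let -1 < t ≤ 0 be such that |z - t| < t + 1. Then the point w = t + (t+1)²/(z - t) lies on the circle centered at c = -1 - i·|z+1|²/(2·Im z) with radius |c + 1|, and w ≠ -1. -/
/-!
Put `u = w + 1 = (t + 1)(z + 1)/(z - t)` and `d = c + 1 = -i k` with `k = |z + 1|² / (2 Im z)`.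
The circle centred at `c` through `-1` is `{u | |u - d| = |d|}`, which inversion `u ↦ d/u` turns
into the line `Re = 1/2`. Since `d/u = -i k/(t + 1) + i k/(z + 1)` and the first term is purely
imaginary, `Re (d/u) = k Im z / |z + 1|² = 1/2`; in particular `u ≠ 0`.
-/

open Complex

namespace Complex

lemma norm_one_sub_eq_norm_of_re_eq_half {q : ℂ} (h : q.re = 1 / 2) : ‖1 - q‖ = ‖q‖ := by
  rw [← sq_eq_sq₀ (norm_nonneg _) (norm_nonneg _), Complex.sq_norm, Complex.sq_norm,
    normSq_apply, normSq_apply]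
  simp only [sub_re, sub_im, one_re, one_im, h]
  ring

lemma norm_sub_eq_norm_of_re_div_eq_half {u d : ℂ} (h : (d / u).re = 1 / 2) :
    ‖u - d‖ = ‖d‖ := by
  have hu : u ≠ 0 := by
    rintro rfl
    norm_num at h
  calc ‖u - d‖ = ‖u‖ * ‖1 - d / u‖ := by
        rw [← norm_mul, mul_sub, mul_one, mul_div_cancel₀ _ hu]
    _ = ‖u‖ * ‖d / u‖ := by rw [norm_one_sub_eq_norm_of_re_eq_half h]
    _ = ‖d‖ := by rw [← norm_mul, mul_div_cancel₀ _ hu]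

lemma re_I_mul_ofReal_div (k : ℝ) (v : ℂ) : (I * k / v).re = k * v.im / normSq v := by
  simp [div_re]

end Complex

lemma add_sq_div_sub_add_one {z : ℂ} {t : ℝ} (hzt : z ≠ t) :
    (t : ℂ) + ((t : ℂ) + 1) ^ 2 / (z - t) + 1 = ((t : ℂ) + 1) * (z + 1) / (z - t) := by
  field_simp [sub_ne_zero.mpr hzt]
  ring

lemma re_neg_I_mul_ofReal_div_eq {z : ℂ} {t : ℝ} (k : ℝ) (ht : t + 1 ≠ 0)
    (hz : z + 1 ≠ 0) :
    (-(I * k) / (((t : ℂ) + 1) * (z + 1) / (z - t))).re = k * z.im / normSq (z + 1) := by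
  have ht' : (t : ℂ) + 1 ≠ 0 := by exact_mod_cast ht
  have hsplit : -(I * k) / (((t : ℂ) + 1) * (z + 1) / (z - t))
      = -(I * k) / (t + 1 : ℝ) + I * k / (z + 1) := by
    push_cast
    field_simp
    ring
  rw [hsplit, add_re, re_I_mul_ofReal_div]
  simp [div_re]

theorem stmt17_general (z : ℂ)
    (hQ : z.im ≠ 0) (t : ℝ) (ht0 : -1 < t) :
    let c : ℂ := -1 - Complex.I * ((‖z + 1‖) ^ 2 / (2 * z.im) : ℝ)
    let w : ℂ := (t : ℂ) + ((t : ℂ) + 1) ^ 2 / (z - t)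
    ‖w - c‖ = ‖c + 1‖ ∧ w ≠ -1 := by
  intro c w
  have hz_ne : z ≠ t := fun h => hQ (by simp [h])
  have hz_add : z + 1 ≠ 0 := fun h => hQ (by simpa using congrArg im h)
  have hw : w + 1 = ((t : ℂ) + 1) * (z + 1) / (z - t) := add_sq_div_sub_add_one hz_ne
  have hc : c + 1 = -(I * (‖z + 1‖ ^ 2 / (2 * z.im) : ℝ)) := by ring
  have hre : ((c + 1) / (w + 1)).re = 1 / 2 := by
    rw [hw, hc, re_neg_I_mul_ofReal_div_eq _ (by linarith) hz_add, ← Complex.sq_norm]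
    field_simp [(sq_pos_of_ne_zero (norm_ne_zero_iff.mpr hz_add)).ne']
  constructor
  · rw [show w - c = (w + 1) - (c + 1) by ring]
    exact norm_sub_eq_norm_of_re_div_eq_half hre
  · intro hw1
    rw [hw1, neg_add_cancel, div_zero] at hre
    norm_num at hre

theorem stmt17 (z : ℂ) (hz0 : 0 < ‖z‖) (hz1 : ‖z‖ ≤ 1)
    (hQ : z.im ≠ 0) (t : ℝ) (ht0 : -1 < t) (ht1 : t ≤ 0)
    (hzt : ‖z - t‖ < t + 1) :
    let c : ℂ := -1 - Complex.I * ((‖z + 1‖) ^ 2 / (2 * z.im) : ℝ)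
    let w : ℂ := (t : ℂ) + ((t : ℂ) + 1) ^ 2 / (z - t)
    ‖w - c‖ = ‖c + 1‖ ∧ w ≠ -1 :=
  stmt17_general z hQ t ht0
end
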